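/- For every integer p ≥ 1, I(p+1) < (√π / (√2 · √p)) · I(p). -/

import Mathlib

open Real

/-- The integration region `R(p)` written with `m = p - 1` variables `φ_1, …, φ_{p-1}`
(zero-indexed): `φ_1 ∈ [π/4, π/2]` and `φ_i ∈ [arctan(∏_{j<i} csc φ_j), π/2]`. -/
noncomputable def Rregion (m : ℕ) : Set (Fin m → ℝ) :=
  {φ | ∀ i : Fin m,
    φ i ∈ Set.Icc
      (if (i : ℕ) = 0 then π / 4
       else Real.arctan (∏ j ∈ Finset.univ.filter (fun j : Fin m => j < i),
         (Real.sin (φ j))⁻¹))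
      (π / 2)}

/-- `I(1) = 1` and, for `p ≥ 2`, `I(p) = ∫_{R(p)} ∏_{i=1}^{p-1} sin^i(φ_i) dφ`. -/
noncomputable def Ifun (p : ℕ) : ℝ :=
  if p ≤ 1 then 1
  else ∫ φ in Rregion (p - 1), ∏ i : Fin (p - 1), Real.sin (φ i) ^ ((i : ℕ) + 1)

namespace IfunAux
open MeasureTheory


noncomputable def igd (m : ℕ) (φ : Fin m → ℝ) : ℝ := ∏ i : Fin m, Real.sin (φ i) ^ ((i : ℕ) + 1)

noncomputable def J (m : ℕ) : ℝ := ∫ φ in Rregion m, igd m φ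

def box (m : ℕ) : Set (Fin m → ℝ) := Set.pi Set.univ (fun _ => Set.Icc (π / 4) (π / 2))

lemma sin_pos_of_mem {x : ℝ} (hx : x ∈ Set.Icc (π/4) (π/2)) : 0 < Real.sin x :=
  Real.sin_pos_of_pos_of_lt_pi (lt_of_lt_of_le (by positivity) hx.1)
    (lt_of_le_of_lt hx.2 (by linarith [pi_pos]))

lemma one_le_csc_of_mem {x : ℝ} (hx : x ∈ Set.Icc (π/4) (π/2)) : 1 ≤ (Real.sin x)⁻¹ := by
  rw [one_le_inv_iff₀]
  exact ⟨sin_pos_of_mem hx, Real.sin_le_one x⟩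

lemma Rregion_subset_box (m : ℕ) : Rregion m ⊆ box m := by
  intro φ hφ
  have key : ∀ n : ℕ, ∀ i : Fin m, (i : ℕ) < n → φ i ∈ Set.Icc (π/4) (π/2) := by
    intro n
    induction n with
    | zero => exact fun i hi => absurd hi (Nat.not_lt_zero _)
    | succ n ih =>
      intro i hi
      have h := hφ i
      refine ⟨le_trans ?_ h.1, h.2⟩
      split_ifs with h0
      · exact le_refl _
      · rw [← Real.arctan_one]
        apply arctan_strictMono.monotone
        calc (1:ℝ) = ∏ _j ∈ Finset.univ.filter (fun j : Fin m => j < i), 1 := by simp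
        _ ≤ _ := by
          apply Finset.prod_le_prod (fun _ _ => zero_le_one)
          intro j hj
          have hji : j < i := (Finset.mem_filter.mp hj).2
          exact one_le_csc_of_mem (ih j (lt_of_lt_of_le hji (Nat.lt_succ_iff.mp hi)))
  exact fun i _ => key m i i.2

/-- one_le product of cosecants on the region -/
lemma one_le_prod_csc {m : ℕ} {φ : Fin m → ℝ} (hφ : φ ∈ Rregion m) (s : Finset (Fin m)) :
    1 ≤ ∏ j ∈ s, (Real.sin (φ j))⁻¹ := by
  calc (1:ℝ) = ∏ _j ∈ s, 1 := by simp
  _ ≤ _ := Finset.prod_le_prod (fun _ _ => zero_le_one)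
    (fun j _ => one_le_csc_of_mem (Rregion_subset_box m hφ j (Set.mem_univ _)))

lemma igd_nonneg {m : ℕ} {φ : Fin m → ℝ} (hφ : φ ∈ box m) : 0 ≤ igd m φ :=
  Finset.prod_nonneg fun i _ => pow_nonneg (sin_pos_of_mem (hφ i (Set.mem_univ _))).le _

lemma igd_le_one {m : ℕ} {φ : Fin m → ℝ} (hφ : φ ∈ box m) : igd m φ ≤ 1 := by
  apply Finset.prod_le_one
  · exact fun i _ => pow_nonneg (sin_pos_of_mem (hφ i (Set.mem_univ _))).le _
  · exact fun i _ => pow_le_one₀ (sin_pos_of_mem (hφ i (Set.mem_univ _))).le (Real.sin_le_one _)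

lemma continuous_igd (m : ℕ) : Continuous (igd m) := by
  unfold igd; fun_prop

lemma measurableSet_Rregion (m : ℕ) : MeasurableSet (Rregion m) := by
  have : Rregion m = ⋂ i : Fin m,
      ({φ : Fin m → ℝ | (if (i : ℕ) = 0 then π / 4
       else Real.arctan (∏ j ∈ Finset.univ.filter (fun j : Fin m => j < i),
         (Real.sin (φ j))⁻¹)) ≤ φ i} ∩ {φ | φ i ≤ π / 2}) := by
    ext φ; simp [Rregion, Set.mem_Icc, forall_and]
  rw [this]
  refine MeasurableSet.iInter fun i => (MeasurableSet.inter ?_ ?_)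
  · apply measurableSet_le _ (measurable_pi_apply i)
    split_ifs
    · exact measurable_const
    · exact Real.measurable_arctan.comp <| Finset.measurable_prod _ fun j _ =>
        (Real.continuous_sin.measurable.comp (measurable_pi_apply j)).inv
  · exact measurableSet_le (measurable_pi_apply i) measurable_const

lemma isCompact_box (m : ℕ) : IsCompact (box m) := isCompact_univ_pi fun _ => isCompact_Icc

lemma integrableOn_igd {m : ℕ} {s : Set (Fin m → ℝ)} (hsub : s ⊆ box m) :
    IntegrableOn (igd m) s := by
  exact ((continuous_igd m).continuousOn.integrableOn_compact (isCompact_box m)).mono_set hsub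

lemma volume_Rregion_ne_top (m : ℕ) : volume (Rregion m) ≠ ⊤ :=
  (lt_of_le_of_lt (measure_mono (Rregion_subset_box m)) (isCompact_box m).measure_lt_top).ne




lemma prod_filter_lt_castSucc {m : ℕ} (f : Fin (m+1) → ℝ) (k : Fin m) :
    ∏ j ∈ Finset.univ.filter (fun j : Fin (m+1) => j < Fin.castSucc k), f j
      = ∏ j ∈ Finset.univ.filter (fun j : Fin m => j < k), f (Fin.castSucc j) := by
  rw [Finset.prod_filter, Finset.prod_filter, Fin.prod_univ_castSucc]
  have h1 : ¬ (Fin.last m < Fin.castSucc k) := by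
    exact not_lt.mpr (Fin.castSucc_lt_last k).le
  rw [if_neg h1, mul_one]
  exact Finset.prod_congr rfl fun j _ => by simp only [Fin.castSucc_lt_castSucc_iff]

lemma prod_filter_lt_last {m : ℕ} (f : Fin (m+1) → ℝ) :
    ∏ j ∈ Finset.univ.filter (fun j : Fin (m+1) => j < Fin.last m), f j
      = ∏ j : Fin m, f (Fin.castSucc j) := by
  rw [Finset.prod_filter, Fin.prod_univ_castSucc, if_neg (lt_irrefl _), mul_one]
  exact Finset.prod_congr rfl fun j _ => by rw [if_pos (Fin.castSucc_lt_last j)]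

example {m : ℕ} (φ : Fin m → ℝ) (t : ℝ) (k : Fin m) :
    (Fin.snoc φ t : Fin (m+1) → ℝ) (Fin.castSucc k) = φ k := by simp

example {m : ℕ} (φ : Fin m → ℝ) (t : ℝ) :
    (Fin.snoc φ t : Fin (m+1) → ℝ) (Fin.last m) = t := by simp


lemma mem_Rregion_snoc {m : ℕ} (φ : Fin m → ℝ) (t : ℝ) :
    (Fin.snoc φ t : Fin (m+1) → ℝ) ∈ Rregion (m+1) ↔
      φ ∈ Rregion m ∧
        t ∈ Set.Icc (Real.arctan (∏ j : Fin m, (Real.sin (φ j))⁻¹)) (π/2) := by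
  set ψ : Fin (m+1) → ℝ := Fin.snoc φ t with hψ
  have hcast : ∀ k : Fin m,
      (ψ (Fin.castSucc k) ∈ Set.Icc
        (if ((Fin.castSucc k : Fin (m+1)) : ℕ) = 0 then π / 4
         else Real.arctan (∏ j ∈ Finset.univ.filter (fun j : Fin (m+1) => j < Fin.castSucc k),
           (Real.sin (ψ j))⁻¹)) (π / 2)) ↔
      (φ k ∈ Set.Icc
        (if (k : ℕ) = 0 then π / 4
         else Real.arctan (∏ j ∈ Finset.univ.filter (fun j : Fin m => j < k),
           (Real.sin (φ j))⁻¹)) (π / 2)) := by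
    intro k
    have h1 : ψ (Fin.castSucc k) = φ k := Fin.snoc_castSucc _ _ _
    have h2 : ((Fin.castSucc k : Fin (m+1)) : ℕ) = (k : ℕ) := rfl
    rw [h1, h2, prod_filter_lt_castSucc (fun j => (Real.sin (ψ j))⁻¹) k]
    have : ∀ j : Fin m, (Real.sin (ψ (Fin.castSucc j)))⁻¹ = (Real.sin (φ j))⁻¹ := by
      intro j; simp only [hψ, Fin.snoc_castSucc]
    rw [Finset.prod_congr rfl (fun j _ => this j)]
  have hlast :
      (if ((Fin.last m : Fin (m+1)) : ℕ) = 0 then π / 4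
       else Real.arctan (∏ j ∈ Finset.univ.filter (fun j : Fin (m+1) => j < Fin.last m),
         (Real.sin (ψ j))⁻¹))
      = Real.arctan (∏ j : Fin m, (Real.sin (φ j))⁻¹) := by
    rcases m with _ | m
    · simp [Real.arctan_one]
    · rw [if_neg (by simp [Fin.last]), prod_filter_lt_last (fun j => (Real.sin (ψ j))⁻¹)]
      exact congrArg _ (Finset.prod_congr rfl fun j _ => by simp only [hψ, Fin.snoc_castSucc])
  constructor
  · intro h
    refine ⟨fun k => (hcast k).mp (h (Fin.castSucc k)), ?_⟩
    have := h (Fin.last m)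
    rw [hlast] at this
    simpa only [hψ, Fin.snoc_last] using this
  · rintro ⟨h1, h2⟩
    intro i
    induction i using Fin.lastCases with
    | last => rw [hlast]; simpa only [hψ, Fin.snoc_last] using h2
    | cast k => exact (hcast k).mpr (h1 k)




noncomputable def W (n : ℕ) : ℝ := ∫ x in (0:ℝ)..(π/2), Real.sin x ^ n

lemma W_zero : W 0 = π / 2 := by simp [W]

lemma W_one : W 1 = 1 := by simp [W, integral_sin]

lemma W_rec (n : ℕ) : W (n + 2) = (n + 1) / (n + 2) * W n := by
  rw [W, integral_sin_pow, W]
  simp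

lemma W_nonneg (n : ℕ) : 0 ≤ W n := by
  apply intervalIntegral.integral_nonneg (by positivity)
  intro x hx
  exact pow_nonneg (Real.sin_nonneg_of_nonneg_of_le_pi hx.1 (by linarith [hx.2, pi_pos])) n

lemma W_succ_le (n : ℕ) : W (n + 1) ≤ W n := by
  apply intervalIntegral.integral_mono_on (by positivity)
  · exact (Real.continuous_sin.pow _).intervalIntegrable _ _
  · exact (Real.continuous_sin.pow _).intervalIntegrable _ _
  · intro x hx
    have h0 : 0 ≤ Real.sin x :=
      Real.sin_nonneg_of_nonneg_of_le_pi hx.1 (by linarith [hx.2, pi_pos])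
    exact pow_le_pow_of_le_one h0 (Real.sin_le_one x) (Nat.le_succ n)

lemma W_mul (n : ℕ) : W n * W (n + 1) = π / (2 * (n + 1)) := by
  induction n with
  | zero => rw [W_zero, W_one]; norm_num
  | succ n ih =>
    rw [W_rec n, mul_comm (W (n+1)), mul_assoc, ih]
    have h1 : (n : ℝ) + 1 ≠ 0 := by positivity
    have h2 : (n : ℝ) + 2 ≠ 0 := by positivity
    push_cast
    field_simp
    ring

lemma W_le_sqrt (n : ℕ) : W (n + 1) ≤ Real.sqrt π / (Real.sqrt 2 * Real.sqrt (n + 1)) := by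
  have h1 : W (n+1) ^ 2 ≤ π / (2 * (n + 1)) := by
    calc W (n+1) ^ 2 = W (n+1) * W (n+1) := by ring
    _ ≤ W n * W (n+1) := mul_le_mul_of_nonneg_right (W_succ_le n) (W_nonneg _)
    _ = π / (2 * (n + 1)) := W_mul n
  have h2 : W (n+1) ≤ Real.sqrt (π / (2 * (n + 1))) := by
    rw [Real.le_sqrt (W_nonneg _) (by positivity)]
    exact h1
  refine h2.trans_eq ?_
  rw [Real.sqrt_div pi_pos.le, Real.sqrt_mul (by norm_num : (0:ℝ) ≤ 2)]


noncomputable def S (n : ℕ) : ℝ := ∫ x in (π/4)..(π/2), Real.sin x ^ n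

lemma S_lt_W (n : ℕ) : S n < W n := by
  have hsplit : W n = (∫ x in (0:ℝ)..(π/4), Real.sin x ^ n) + S n := by
    rw [W, S, intervalIntegral.integral_add_adjacent_intervals]
    · exact (Real.continuous_sin.pow _).intervalIntegrable _ _
    · exact (Real.continuous_sin.pow _).intervalIntegrable _ _
  have hpos : 0 < ∫ x in (0:ℝ)..(π/4), Real.sin x ^ n := by
    apply intervalIntegral.intervalIntegral_pos_of_pos_on
      ((Real.continuous_sin.pow _).intervalIntegrable _ _)
    · intro x hx
      exact pow_pos (Real.sin_pos_of_pos_of_lt_pi hx.1 (by linarith [hx.2, pi_pos])) n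
    · linarith [pi_pos]
  linarith

lemma S_lt (n : ℕ) : S (n + 1) < Real.sqrt π / (Real.sqrt 2 * Real.sqrt (n + 1)) :=
  (S_lt_W (n+1)).trans_le (W_le_sqrt n)

lemma S_nonneg (n : ℕ) : 0 ≤ S n := by
  apply intervalIntegral.integral_nonneg (by linarith [pi_pos])
  intro x hx
  have := pi_pos
  exact pow_nonneg (Real.sin_nonneg_of_nonneg_of_le_pi (by linarith [hx.1]) (by linarith [hx.2])) n


lemma exists_b (m : ℕ) : ∃ b, b ∈ Set.Ioo (π/4) (π/2) ∧ 1 < Real.sin b ^ m * Real.tan b := by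
  have h1 : Filter.Tendsto (fun b => Real.sin b ^ m * Real.tan b)
      (nhdsWithin (π/2) (Set.Iio (π/2))) Filter.atTop := by
    apply Filter.Tendsto.pos_mul_atTop one_pos _ Real.tendsto_tan_pi_div_two
    have := ((Real.continuous_sin.pow m).tendsto (π/2)).mono_left
      (nhdsWithin_le_nhds (s := Set.Iio (π/2)))
    convert this using 2 <;> simp
  have h2 := (h1.eventually_gt_atTop 1).and
    (eventually_mem_nhdsWithin.mono (fun x hx => hx) |>.filter_mono le_rfl)
  have h3 : Set.Ioo (π/4) (π/2) ∈ nhdsWithin (π/2) (Set.Iio (π/2)) :=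
    Ioo_mem_nhdsLT_of_mem ⟨by linarith [pi_pos], le_refl _⟩
  have h4 := (h1.eventually_gt_atTop 1).and (Filter.eventually_of_mem h3 (fun x hx => hx))
  obtain ⟨b, hb2, hb1⟩ := h4.exists
  exact ⟨b, hb1, hb2⟩

lemma J_pos (m : ℕ) : 0 < J m := by
  obtain ⟨b, hb1, hb2⟩ := exists_b m
  have hπ := pi_pos
  have hb_pos : 0 < b := lt_trans (by positivity) hb1.1
  have hsinb : 0 < Real.sin b := Real.sin_pos_of_pos_of_lt_pi hb_pos (by linarith [hb1.2])
  set B : Set (Fin m → ℝ) := Set.pi Set.univ (fun _ => Set.Icc b (π/2)) with hB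
  have hBbox : B ⊆ box m := fun φ hφ i hi =>
    ⟨le_trans hb1.1.le (hφ i hi).1, (hφ i hi).2⟩
  -- B ⊆ Rregion m
  have hBR : B ⊆ Rregion m := by
    intro φ hφ i
    have hbφ : ∀ j : Fin m, b ≤ φ j := fun j => (hφ j (Set.mem_univ _)).1
    refine ⟨?_, (hφ i (Set.mem_univ _)).2⟩
    split_ifs with h0
    · exact le_trans hb1.1.le (hbφ i)
    · refine le_trans ?_ (hbφ i)
      have hprod : (∏ j ∈ Finset.univ.filter (fun j : Fin m => j < i),
          (Real.sin (φ j))⁻¹) ≤ Real.tan b := by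
        have hstep1 : (∏ j ∈ Finset.univ.filter (fun j : Fin m => j < i),
            (Real.sin (φ j))⁻¹) ≤ (Real.sin b)⁻¹ ^ (Finset.univ.filter (fun j : Fin m => j < i)).card := by
          rw [← Finset.prod_const]
          apply Finset.prod_le_prod
          · intro j _
            exact inv_nonneg.mpr (Real.sin_nonneg_of_nonneg_of_le_pi
              (by linarith [hbφ j]) (by linarith [(hφ j (Set.mem_univ _)).2]))
          · intro j _
            apply inv_anti₀ hsinb
            apply Real.sin_le_sin_of_le_of_le_pi_div_two (by linarith) (hφ j (Set.mem_univ _)).2 (hbφ j)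
        have hone : 1 ≤ (Real.sin b)⁻¹ := by
          rw [one_le_inv_iff₀]; exact ⟨hsinb, Real.sin_le_one b⟩
        have hstep2 : (Real.sin b)⁻¹ ^ (Finset.univ.filter (fun j : Fin m => j < i)).card
            ≤ (Real.sin b)⁻¹ ^ m := by
          apply pow_le_pow_right₀ hone
          exact le_trans (Finset.card_filter_le _ _) (by simp)
        have hstep3 : (Real.sin b)⁻¹ ^ m ≤ Real.tan b := by
          rw [inv_pow]
          rw [inv_le_iff_one_le_mul₀ (by positivity)]
          calc (1:ℝ) ≤ Real.sin b ^ m * Real.tan b := hb2.le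
          _ = Real.tan b * Real.sin b ^ m := mul_comm _ _
        exact le_trans (le_trans hstep1 hstep2) hstep3
      calc Real.arctan _ ≤ Real.arctan (Real.tan b) := arctan_strictMono.monotone hprod
      _ = b := Real.arctan_tan (by linarith) hb1.2
  -- volume of B
  have hBmeas : MeasurableSet B := MeasurableSet.univ_pi fun _ => measurableSet_Icc
  have hvol : (volume B).toReal = (π/2 - b) ^ m := by
    rw [hB, volume_pi_pi]
    simp only [Real.volume_Icc, Finset.prod_const, Finset.card_univ, Fintype.card_fin,
      ENNReal.toReal_pow]
    rw [ENNReal.toReal_ofReal (by linarith [hb1.2] : (0:ℝ) ≤ π/2 - b)]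
  set K : ℕ := ∑ i : Fin m, ((i : ℕ) + 1) with hK
  have hlow : ∀ φ ∈ B, Real.sin b ^ K ≤ igd m φ := by
    intro φ hφ
    rw [hK, ← Finset.prod_pow_eq_pow_sum]
    apply Finset.prod_le_prod
    · intro i _; positivity
    · intro i _
      apply pow_le_pow_left₀ hsinb.le
      exact Real.sin_le_sin_of_le_of_le_pi_div_two (by linarith)
        (hφ i (Set.mem_univ _)).2 (hφ i (Set.mem_univ _)).1
  have hint : 0 < ∫ φ in B, igd m φ := by
    have h1 : (Real.sin b ^ K) * (π/2 - b) ^ m ≤ ∫ φ in B, igd m φ := by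
      have := setIntegral_mono_on ((integrableOn_const_iff (C := Real.sin b ^ K)).mpr (Or.inr ?fin)) (integrableOn_igd hBbox)
        hBmeas hlow
      · rw [setIntegral_const, measureReal_def, hvol] at this
        simpa [smul_eq_mul, mul_comm] using this
      case fin =>
        exact lt_of_le_of_lt (measure_mono hBbox)
          (isCompact_univ_pi fun _ => isCompact_Icc).measure_lt_top
    have h2 : 0 < (Real.sin b ^ K) * (π/2 - b) ^ m := by
      have : 0 < π/2 - b := by linarith [hb1.2]
      positivity
    linarith
  have hmono : ∫ φ in B, igd m φ ≤ J m := by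
    apply setIntegral_mono_set (integrableOn_igd (Rregion_subset_box m))
    · exact ae_restrict_of_forall_mem (measurableSet_Rregion m)
        (fun x hx => igd_nonneg (Rregion_subset_box m hx))
    · exact HasSubset.Subset.eventuallyLE hBR
  linarith


lemma igd_snoc {m : ℕ} (φ : Fin m → ℝ) (t : ℝ) :
    igd (m+1) (Fin.snoc φ t) = igd m φ * Real.sin t ^ (m+1) := by
  unfold igd
  rw [Fin.prod_univ_castSucc]
  congr 1
  · exact Finset.prod_congr rfl fun i _ => by rw [Fin.snoc_castSucc, Fin.coe_castSucc]
  · rw [Fin.snoc_last, Fin.val_last]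

noncomputable def gfun (m : ℕ) (φ : Fin m → ℝ) : ℝ :=
  Real.arctan (∏ j : Fin m, (Real.sin (φ j))⁻¹)

noncomputable def inner' (m : ℕ) (φ : Fin m → ℝ) : ℝ :=
  ∫ t in (gfun m φ)..(π/2), Real.sin t ^ (m+1)

lemma gfun_lt (m : ℕ) (φ : Fin m → ℝ) : gfun m φ < π/2 := Real.arctan_lt_pi_div_two _

lemma measurable_gfun (m : ℕ) : Measurable (gfun m) :=
  Real.measurable_arctan.comp <| Finset.measurable_prod _ fun j _ =>
    (Real.continuous_sin.measurable.comp (measurable_pi_apply j)).inv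

lemma measurable_inner' (m : ℕ) : Measurable (inner' m) := by
  have hc : Continuous fun c : ℝ => ∫ t in c..(π/2), Real.sin t ^ (m+1) := by
    have h1 : ∀ c : ℝ, (∫ t in c..(π/2), Real.sin t ^ (m+1)) =
        (∫ t in (0:ℝ)..(π/2), Real.sin t ^ (m+1)) - ∫ t in (0:ℝ)..c, Real.sin t ^ (m+1) := by
      intro c
      have := intervalIntegral.integral_add_adjacent_intervals
        (μ := volume) (f := fun t => Real.sin t ^ (m+1))
        ((Real.continuous_sin.pow _).intervalIntegrable (0:ℝ) c)
        ((Real.continuous_sin.pow _).intervalIntegrable c (π/2))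
      linarith
    have h2 : (fun c : ℝ => ∫ t in c..(π/2), Real.sin t ^ (m+1))
        = fun c => (∫ t in (0:ℝ)..(π/2), Real.sin t ^ (m+1))
            - ∫ t in (0:ℝ)..c, Real.sin t ^ (m+1) := funext h1
    rw [h2]
    exact continuous_const.sub (intervalIntegral.continuous_primitive
      (fun _ _ => (Real.continuous_sin.pow _).intervalIntegrable _ _) 0)
  exact hc.measurable.comp (measurable_gfun m)

lemma abs_inner'_le (m : ℕ) (φ : Fin m → ℝ) : ‖inner' m φ‖ ≤ |π/2 - gfun m φ| := by
  calc ‖inner' m φ‖ ≤ 1 * |π/2 - gfun m φ| := by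
        apply intervalIntegral.norm_integral_le_of_norm_le_const
        intro x _
        rw [Real.norm_eq_abs, abs_pow]
        exact pow_le_one₀ (abs_nonneg _) (abs_le.mpr ⟨Real.neg_one_le_sin x, Real.sin_le_one x⟩)
  _ = |π/2 - gfun m φ| := one_mul _

lemma J_succ_eq (m : ℕ) :
    J (m+1) = ∫ φ in Rregion m, igd m φ * inner' m φ := by
  have hmeas1 : MeasurableSet (Rregion (m+1)) := measurableSet_Rregion (m+1)
  set F : (Fin (m+1) → ℝ) → ℝ := (Rregion (m+1)).indicator (igd (m+1)) with hF
  have h1 : J (m+1) = ∫ x, F x := by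
    rw [hF, integral_indicator hmeas1]; rfl
  set e : (Fin (m+1) → ℝ) ≃ᵐ ℝ × (Fin m → ℝ) :=
    MeasurableEquiv.piFinSuccAbove (fun _ : Fin (m+1) => ℝ) (Fin.last m) with he
  have hmp : MeasurePreserving e.symm
      ((volume : Measure ℝ).prod (volume : Measure (Fin m → ℝ))) volume :=
    (measurePreserving_piFinSuccAbove (fun _ : Fin (m+1) => (volume : Measure ℝ))
      (Fin.last m)).symm
  have h2 : ∫ x, F x = ∫ y : ℝ × (Fin m → ℝ), F (e.symm y) :=
    (hmp.integral_comp' F).symm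
  have hesymm : ∀ y : ℝ × (Fin m → ℝ), e.symm y = Fin.snoc y.2 y.1 := by
    intro y
    show (Fin.insertNthEquiv (fun _ : Fin (m+1) => ℝ) (Fin.last m)) y = _
    rw [Fin.insertNthEquiv_last]
    rfl
  have hFint : Integrable F := by
    rw [hF, integrable_indicator_iff hmeas1]
    exact integrableOn_igd (Rregion_subset_box (m+1))
  have hGint : Integrable (fun y : ℝ × (Fin m → ℝ) => F (e.symm y))
      ((volume : Measure ℝ).prod (volume : Measure (Fin m → ℝ))) :=
    (hmp.integrable_comp_emb e.symm.measurableEmbedding).mpr hFint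
  have h3 : (∫ y : ℝ × (Fin m → ℝ), F (e.symm y))
      = ∫ φ : Fin m → ℝ, ∫ t : ℝ, F (e.symm (t, φ)) :=
    MeasureTheory.integral_prod_symm _ hGint
  have h4 : ∀ φ : Fin m → ℝ, (∫ t : ℝ, F (e.symm (t, φ)))
      = (Rregion m).indicator (fun φ => igd m φ * inner' m φ) φ := by
    intro φ
    have hsnoc : ∀ t : ℝ, F (e.symm (t, φ)) = F (Fin.snoc φ t) := fun t => by rw [hesymm]
    by_cases hφ : φ ∈ Rregion m
    · rw [Set.indicator_of_mem hφ]
      have hptwise : ∀ t : ℝ, F (e.symm (t, φ)) =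
          (Set.Icc (gfun m φ) (π/2)).indicator
            (fun t => igd m φ * Real.sin t ^ (m+1)) t := by
        intro t
        rw [hsnoc t]
        by_cases ht : t ∈ Set.Icc (gfun m φ) (π/2)
        · rw [Set.indicator_of_mem ht, hF,
            Set.indicator_of_mem ((mem_Rregion_snoc φ t).mpr ⟨hφ, ht⟩), igd_snoc]
        · rw [Set.indicator_of_notMem ht, hF, Set.indicator_of_notMem]
          rw [mem_Rregion_snoc]
          exact fun h => ht h.2
      rw [integral_congr_ae (Filter.Eventually.of_forall hptwise),
        integral_indicator measurableSet_Icc]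
      rw [MeasureTheory.integral_Icc_eq_integral_Ioc,
        ← intervalIntegral.integral_of_le (gfun_lt m φ).le]
      rw [intervalIntegral.integral_const_mul]
      rfl
    · rw [Set.indicator_of_notMem hφ]
      have : ∀ t : ℝ, F (e.symm (t, φ)) = 0 := by
        intro t
        rw [hsnoc t, hF, Set.indicator_of_notMem]
        rw [mem_Rregion_snoc]
        exact fun h => hφ h.1
      simp [this]
  calc J (m+1) = ∫ x, F x := h1
  _ = ∫ y : ℝ × (Fin m → ℝ), F (e.symm y) := h2
  _ = ∫ φ : Fin m → ℝ, ∫ t : ℝ, F (e.symm (t, φ)) := h3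
  _ = ∫ φ : Fin m → ℝ, (Rregion m).indicator (fun φ => igd m φ * inner' m φ) φ :=
      integral_congr_ae (Filter.Eventually.of_forall h4)
  _ = ∫ φ in Rregion m, igd m φ * inner' m φ :=
      integral_indicator (measurableSet_Rregion m)



lemma pi_div_four_le_gfun {m : ℕ} {φ : Fin m → ℝ} (hφ : φ ∈ Rregion m) :
    π/4 ≤ gfun m φ := by
  rw [← Real.arctan_one]
  exact arctan_strictMono.monotone (one_le_prod_csc hφ Finset.univ)

lemma inner'_le {m : ℕ} {φ : Fin m → ℝ} (hφ : φ ∈ Rregion m) : inner' m φ ≤ S (m+1) := by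
  apply intervalIntegral.integral_mono_interval (pi_div_four_le_gfun hφ)
    (gfun_lt m φ).le (le_refl (π/2))
  · apply ae_restrict_of_forall_mem measurableSet_Ioc
    intro x hx
    have hπ := pi_pos
    exact pow_nonneg (Real.sin_nonneg_of_nonneg_of_le_pi (by linarith [hx.1])
      (by linarith [hx.2])) _
  · exact (Real.continuous_sin.pow _).intervalIntegrable _ _

lemma J_succ_lt (m : ℕ) :
    J (m+1) < Real.sqrt π / (Real.sqrt 2 * Real.sqrt (m+1)) * J m := by
  rw [J_succ_eq]
  have habs : ∀ᵐ φ ∂(volume.restrict (Rregion m)), ‖igd m φ * inner' m φ‖ ≤ π/2 := by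
    apply ae_restrict_of_forall_mem (measurableSet_Rregion m)
    intro φ hφ
    have hbox := Rregion_subset_box m hφ
    rw [norm_mul]
    have h1 : ‖igd m φ‖ ≤ 1 := by
      rw [Real.norm_eq_abs, abs_of_nonneg (igd_nonneg hbox)]
      exact igd_le_one hbox
    have h2 : ‖inner' m φ‖ ≤ π/2 := by
      refine (abs_inner'_le m φ).trans ?_
      rw [abs_of_nonneg (by linarith [gfun_lt m φ] : (0:ℝ) ≤ π/2 - gfun m φ)]
      linarith [pi_div_four_le_gfun hφ, pi_pos]
    calc ‖igd m φ‖ * ‖inner' m φ‖ ≤ 1 * (π/2) :=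
      mul_le_mul h1 h2 (norm_nonneg _) zero_le_one
    _ = π/2 := one_mul _
  have hint1 : IntegrableOn (fun φ => igd m φ * inner' m φ) (Rregion m) := by
    apply Measure.integrableOn_of_bounded (volume_Rregion_ne_top m) ?_ habs
    exact ((continuous_igd m).measurable.mul (measurable_inner' m)).aestronglyMeasurable
  have hint2 : IntegrableOn (fun φ => igd m φ * S (m+1)) (Rregion m) :=
    (integrableOn_igd (Rregion_subset_box m)).mul_const _
  have h1 : ∀ φ ∈ Rregion m, igd m φ * inner' m φ ≤ igd m φ * S (m+1) := fun φ hφ =>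
    mul_le_mul_of_nonneg_left (inner'_le hφ) (igd_nonneg (Rregion_subset_box m hφ))
  have hle := setIntegral_mono_on hint1 hint2 (measurableSet_Rregion m) h1
  have heq : ∫ φ in Rregion m, igd m φ * S (m+1) = S (m+1) * J m := by
    rw [MeasureTheory.integral_mul_const]
    exact mul_comm _ _
  rw [heq] at hle
  refine lt_of_le_of_lt hle ?_
  have := S_lt m
  push_cast at this ⊢
  exact mul_lt_mul_of_pos_right this (J_pos m)



lemma Rregion_zero : Rregion 0 = Set.univ := Set.eq_univ_of_forall fun φ i => i.elim0

lemma Ifun_eq_J (p : ℕ) (hp : 1 ≤ p) : Ifun p = J (p - 1) := by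
  rcases Nat.lt_or_ge p 2 with h | h
  · have hp1 : p = 1 := by omega
    subst hp1
    rw [Ifun, if_pos (le_refl 1)]
    have higd : ∀ φ : Fin 0 → ℝ, igd 0 φ = 1 := fun φ => by simp [igd]
    rw [show (1:ℕ) - 1 = 0 from rfl, J]
    rw [Rregion_zero]
    rw [Measure.restrict_univ]
    rw [integral_congr_ae (Filter.Eventually.of_forall higd)]
    rw [integral_const, smul_eq_mul, mul_one, MeasureTheory.volume_pi, measureReal_def, Measure.pi_univ]
    simp
  · rw [Ifun, if_neg (by omega)]
    rfl

end IfunAux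

/-- For every integer `p ≥ 1`, `I(p+1) < (√π/(√2 √p)) I(p)`. -/
theorem Ifun_decrease (p : ℕ) (hp : 1 ≤ p) :
    Ifun (p + 1) < (Real.sqrt π / (Real.sqrt 2 * Real.sqrt p)) * Ifun p := by
  obtain ⟨m, rfl⟩ : ∃ m, p = m + 1 := ⟨p - 1, (Nat.succ_pred_eq_of_pos hp).symm⟩
  rw [IfunAux.Ifun_eq_J (m + 1 + 1) (by omega), IfunAux.Ifun_eq_J (m + 1) (by omega)]
  simp only [Nat.add_sub_cancel]
  have := IfunAux.J_succ_lt m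
  push_cast at this ⊢
  exact this
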